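/- arXiv:2211.11490 — 2 statements merged into one kernel-verified Lean document; each statement's English description precedes it below -/
import Mathlib

section
/- Let X be a nonnegative integer-valued random variable with finite mean. Then X is Poisson distributed if and only if for every bounded function f : ℕ → ℝ, E[X]·E[f(X+1)] = E[X·f(X)]. -/
open MeasureTheory Real
open scoped ProbabilityTheory ENNReal NNReal

private lemma aux_integrable_map {Ω : Type*} [MeasureSpace Ω] (X : Ω → ℕ) (hX : Measurable X)
    (g : ℕ → ℝ) (hg : Integrable (fun ω => g (X ω)) ℙ) :
    Integrable g (Measure.map X ℙ) := by
  rw [integrable_map_measure measurable_from_nat.aestronglyMeasurable hX.aemeasurable]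
  exact hg

private lemma aux_integral_tsum {Ω : Type*} [MeasureSpace Ω] (X : Ω → ℕ) (hX : Measurable X)
    (g : ℕ → ℝ) (hg : Integrable (fun ω => g (X ω)) ℙ) :
    ∫ ω, g (X ω) = ∑' k, (ℙ {ω | X ω = k}).toReal * g k := by
  have hmap := aux_integrable_map X hX g hg
  rw [← integral_map hX.aemeasurable hmap.aestronglyMeasurable, integral_countable' hmap]
  congr 1 with k
  rw [measureReal_def, Measure.map_apply hX (measurableSet_singleton k)]
  rfl

private lemma aux_summable {Ω : Type*} [MeasureSpace Ω] (X : Ω → ℕ) (hX : Measurable X)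
    (g : ℕ → ℝ) (hg : Integrable (fun ω => g (X ω)) ℙ) :
    Summable (fun k => (ℙ {ω | X ω = k}).toReal * g k) := by
  have hmap := aux_integrable_map X hX g hg
  have hfin : ∑' k, ((‖g k‖₊ : ℝ≥0∞) * (Measure.map X ℙ) {k}) ≠ ⊤ := by
    have := hmap.hasFiniteIntegral
    rw [HasFiniteIntegral, lintegral_countable'] at this
    simpa [enorm_eq_nnnorm] using this.ne
  have hsum : Summable (fun k => ((‖g k‖₊ : ℝ≥0∞) * (Measure.map X ℙ) {k}).toReal) :=
    ENNReal.summable_toReal hfin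
  refine Summable.of_norm (hsum.congr fun k => ?_)
  rw [ENNReal.toReal_mul, Measure.map_apply hX (measurableSet_singleton k)]
  have : X ⁻¹' {k} = {ω | X ω = k} := rfl
  rw [this]
  simp [norm_mul, abs_mul, mul_comm, abs_of_nonneg ENNReal.toReal_nonneg]

/-- **Chen–Stein characterization of the Poisson distribution.**
A nonnegative integer-valued random variable `X` with finite mean `λ = E[X]` is
Poisson distributed (with parameter `λ`) if and only if for every bounded
`f : ℕ → ℝ` one has `E[X] · E[f(X+1)] = E[X · f(X)]`. -/
theorem poisson_iff_size_bias_identity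
    {Ω : Type*} [MeasureSpace Ω] [IsProbabilityMeasure (ℙ : Measure Ω)]
    (X : Ω → ℕ) (hXmeas : Measurable X)
    (hint : Integrable (fun ω => (X ω : ℝ)) ℙ) :
    (∀ k : ℕ, (ℙ {ω | X ω = k}).toReal
        = Real.exp (-(∫ ω, (X ω : ℝ))) * (∫ ω, (X ω : ℝ))^k / (Nat.factorial k : ℝ))
    ↔
    (∀ f : ℕ → ℝ, (∃ Cf : ℝ, ∀ n, |f n| ≤ Cf) →
      (∫ ω, (X ω : ℝ)) * (∫ ω, f (X ω + 1)) = ∫ ω, f (X ω) * (X ω : ℝ)) := by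
  set lam : ℝ := ∫ ω, (X ω : ℝ) with hlam
  set p : ℕ → ℝ := fun k => (ℙ {ω | X ω = k}).toReal with hp
  -- basic integrability facts for bounded f
  have hbdd_int : ∀ (g : ℕ → ℝ), (∃ C : ℝ, ∀ n, |g n| ≤ C) →
      Integrable (fun ω => g (X ω)) ℙ := by
    rintro g ⟨C, hC⟩
    refine Integrable.mono' (integrable_const C) (measurable_from_nat.comp hXmeas).aestronglyMeasurable ?_
    exact Filter.Eventually.of_forall fun ω => by simpa [Real.norm_eq_abs] using hC (X ω)
  have hmul_int : ∀ (f : ℕ → ℝ), (∃ C : ℝ, ∀ n, |f n| ≤ C) →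
      Integrable (fun ω => f (X ω) * (X ω : ℝ)) ℙ := by
    rintro f ⟨C, hC⟩
    refine Integrable.bdd_mul (c := C) hint (measurable_from_nat.comp hXmeas).aestronglyMeasurable ?_
    exact Filter.Eventually.of_forall fun ω => by simpa [Real.norm_eq_abs] using hC (X ω)
  constructor
  · -- forward direction
    intro hPois f hf
    obtain ⟨C, hC⟩ := hf
    have h1 : Integrable (fun ω => f (X ω + 1)) ℙ :=
      hbdd_int (fun n => f (n + 1)) ⟨C, fun n => hC (n + 1)⟩
    have h2 : Integrable (fun ω => f (X ω) * (X ω : ℝ)) ℙ := hmul_int f ⟨C, hC⟩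
    have e1 : ∫ ω, f (X ω + 1) = ∑' k, p k * f (k + 1) :=
      aux_integral_tsum X hXmeas (fun n => f (n + 1)) h1
    have e2 : ∫ ω, f (X ω) * (X ω : ℝ) = ∑' k, p k * (f k * k) :=
      aux_integral_tsum X hXmeas (fun n => f n * n) h2
    have hsum2 : Summable (fun k => p k * (f k * k)) :=
      aux_summable X hXmeas (fun n => f n * n) h2
    rw [e1, e2]
    rw [Summable.tsum_eq_zero_add hsum2]
    simp only [hp]
    have hz : p 0 * (f 0 * (0 : ℕ)) = 0 := by simp
    rw [hz, zero_add, ← tsum_mul_left]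
    refine tsum_congr fun k => ?_
    rw [hPois k, hPois (k + 1)]
    have hfact : ((k + 1).factorial : ℝ) = (k + 1) * (k.factorial : ℝ) := by
      rw [Nat.factorial_succ]; push_cast; ring
    have hkfact : (k.factorial : ℝ) ≠ 0 := Nat.cast_ne_zero.mpr k.factorial_ne_zero
    have hk1 : ((k : ℝ) + 1) ≠ 0 := by positivity
    rw [hfact]
    push_cast
    field_simp
    ring
  · -- backward direction
    intro h
    -- step 1: the recurrence (k+1) p(k+1) = lam * p k
    have hrec : ∀ k : ℕ, lam * p k = p (k + 1) * ((k : ℝ) + 1) := by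
      intro k
      have hfb : ∃ C : ℝ, ∀ n, |(if n = k + 1 then (1:ℝ) else 0)| ≤ C := by
        refine ⟨1, fun n => ?_⟩
        split <;> simp
      have := h (fun n => if n = k + 1 then (1:ℝ) else 0) hfb
      have h1 : Integrable (fun ω => (if X ω + 1 = k + 1 then (1:ℝ) else 0)) ℙ := by
        have := hbdd_int (fun n => if n + 1 = k + 1 then (1:ℝ) else 0)
          ⟨1, fun n => by by_cases hh : n = k <;> simp [hh]⟩
        simpa using this
      have h2 : Integrable (fun ω => (if X ω = k + 1 then (1:ℝ) else 0) * (X ω : ℝ)) ℙ :=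
        hmul_int (fun n => if n = k + 1 then (1:ℝ) else 0) hfb
      have e1 : ∫ ω, (if X ω + 1 = k + 1 then (1:ℝ) else 0)
          = ∑' n, p n * (if n + 1 = k + 1 then (1:ℝ) else 0) :=
        aux_integral_tsum X hXmeas (fun n => if n + 1 = k + 1 then (1:ℝ) else 0) h1
      have e2 : ∫ ω, (if X ω = k + 1 then (1:ℝ) else 0) * (X ω : ℝ)
          = ∑' n, p n * ((if n = k + 1 then (1:ℝ) else 0) * n) :=
        aux_integral_tsum X hXmeas (fun n => (if n = k + 1 then (1:ℝ) else 0) * n) h2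
      have t1 : (∑' n, p n * (if n + 1 = k + 1 then (1:ℝ) else 0)) = p k := by
        rw [tsum_eq_single k]
        · simp
        · intro n hn
          have : ¬ (n + 1 = k + 1) := fun hh => hn (Nat.succ_injective hh)
          simp [this, hn]
      have t2 : (∑' n, p n * ((if n = k + 1 then (1:ℝ) else 0) * n)) = p (k + 1) * ((k : ℝ) + 1) := by
        rw [tsum_eq_single (k + 1)]
        · rw [if_pos rfl, one_mul]; push_cast; ring
        · intro n hn
          simp [hn]
      rw [e1, e2, t1, t2] at this
      exact this
    -- step 2: closed form with p 0
    have hform : ∀ k : ℕ, p k = p 0 * (lam ^ k / (k.factorial : ℝ)) := by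
      intro k
      induction k with
      | zero => simp
      | succ k ih =>
        have hk1 : ((k : ℝ) + 1) ≠ 0 := by positivity
        have := hrec k
        rw [ih] at this
        have hkfact : (k.factorial : ℝ) ≠ 0 := Nat.cast_ne_zero.mpr k.factorial_ne_zero
        have hfact : ((k + 1).factorial : ℝ) = ((k : ℝ) + 1) * (k.factorial : ℝ) := by
          rw [Nat.factorial_succ]; push_cast; ring
        have : p (k + 1) = lam * (p 0 * (lam ^ k / (k.factorial : ℝ))) / ((k : ℝ) + 1) := by
          field_simp at this ⊢
          linarith [this]
        rw [this, hfact]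
        field_simp
        ring
    -- step 3: total mass 1
    have htot : (∑' k, p k) = 1 := by
      have hU : (⋃ k, X ⁻¹' {k}) = Set.univ := by
        ext ω; simp
      have hdisj : Pairwise (Function.onFun Disjoint fun k => X ⁻¹' {k}) := by
        intro i j hij
        exact Disjoint.preimage X (by simpa using hij)
      have hmeas : ∀ k, MeasurableSet (X ⁻¹' {k}) :=
        fun k => hXmeas (measurableSet_singleton k)
      have h1 : (∑' k, ℙ (X ⁻¹' {k})) = 1 := by
        rw [← measure_iUnion hdisj hmeas, hU, measure_univ]
      have := congrArg ENNReal.toReal h1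
      rw [ENNReal.tsum_toReal_eq (fun k => measure_ne_top _ _)] at this
      exact this
    -- step 4: p 0 = exp (-lam)
    have hsumform : (∑' k, p 0 * (lam ^ k / (k.factorial : ℝ))) = p 0 * Real.exp lam := by
      rw [tsum_mul_left]
      congr 1
      rw [Real.exp_eq_exp_ℝ, NormedSpace.exp_eq_tsum_div]
    have hp0 : p 0 * Real.exp lam = 1 := by
      rw [← hsumform, ← htot]
      exact tsum_congr fun k => (hform k).symm
    have hp0' : p 0 = Real.exp (-lam) := by
      rw [Real.exp_neg]
      field_simp at hp0 ⊢
      linarith [hp0]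
    intro k
    have hk := hform k
    rw [hp0'] at hk
    simp only [hp] at hk
    rw [hk]; ring
end

section
/- Let W = Y₁ + ⋯ + Y_l be a sum of Bernoulli random variables Y_i with means p_i (no independence assumed), and let Z be Poisson with mean λ = Σ p_i. For each k, let U_k and V_k be random variables on the same probability space such that U_k has the distribution of W and 1 + V_k has the distribution of W conditioned on {Y_k = 1} (with V_k = 0 if P(Y_k = 1) = 0). Then the total variation distance satisfies d_TV(W, Z) ≤ (1 ∧ 1/λ) · Σ_{i=1}^l p_i · E[|U_i − V_i|]. -/
open MeasureTheory Finset
open scoped ProbabilityTheory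

/-- The probability that a Poisson random variable with mean `lam` lies in `B ⊆ ℕ`. -/
noncomputable def poissonProb (lam : ℝ) (B : Set ℕ) : ℝ :=
  ∑' k : B, Real.exp (-lam) * lam ^ (k : ℕ) / (Nat.factorial (k : ℕ) : ℝ)

noncomputable def pois (lam : ℝ) (k : ℕ) : ℝ :=
  Real.exp (-lam) * lam ^ k / (Nat.factorial k : ℝ)

open Classical in
noncomputable def chi (A : Set ℕ) (n : ℕ) : ℝ := if n ∈ A then 1 else 0

noncomputable def Fc (lam : ℝ) (n : ℕ) : ℝ := ∑ k ∈ range n, pois lam k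

noncomputable def PAc (lam : ℝ) (A : Set ℕ) (n : ℕ) : ℝ := ∑ k ∈ range n, chi A k * pois lam k

noncomputable def steinG (lam : ℝ) (A : Set ℕ) : ℕ → ℝ
  | 0 => 0
  | n + 1 => (chi A n - poissonProb lam A + n * steinG lam A n) / lam

lemma chi_nonneg (A : Set ℕ) (n : ℕ) : 0 ≤ chi A n := by
  unfold chi; split <;> norm_num

lemma chi_le_one (A : Set ℕ) (n : ℕ) : chi A n ≤ 1 := by
  unfold chi; split <;> norm_num

section analytic
variable {lam : ℝ}

lemma pois_pos (hl : 0 < lam) (k : ℕ) : 0 < pois lam k := by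
  unfold pois
  have := Real.exp_pos (-lam)
  have h2 : (0:ℝ) < lam ^ k := pow_pos hl k
  have h3 : (0:ℝ) < (Nat.factorial k : ℝ) := by exact_mod_cast Nat.factorial_pos k
  positivity

lemma summable_pois : Summable (pois lam) := by
  have := (Real.summable_pow_div_factorial lam).mul_left (Real.exp (-lam))
  refine this.congr fun k => ?_
  unfold pois; ring

lemma tsum_pois : ∑' k, pois lam k = 1 := by
  have h : ∑' k, (lam ^ k / (Nat.factorial k : ℝ)) = Real.exp lam := by
    rw [Real.exp_eq_exp_ℝ, NormedSpace.exp_eq_tsum_div]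
  have h2 : ∑' k, pois lam k = Real.exp (-lam) * ∑' k, (lam ^ k / (Nat.factorial k : ℝ)) := by
    rw [← tsum_mul_left]
    congr 1; funext k; unfold pois; ring
  rw [h2, h, ← Real.exp_add]
  simp

lemma summable_chipois (hl : 0 < lam) (A : Set ℕ) :
    Summable (fun k => chi A k * pois lam k) := by
  refine Summable.of_nonneg_of_le
    (fun k => mul_nonneg (chi_nonneg A k) (pois_pos hl k).le) (fun k => ?_) (summable_pois (lam := lam))
  calc chi A k * pois lam k ≤ 1 * pois lam k :=
        mul_le_mul_of_nonneg_right (chi_le_one A k) (pois_pos hl k).le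
    _ = pois lam k := one_mul _

lemma poissonProb_eq (lam : ℝ) (A : Set ℕ) :
    poissonProb lam A = ∑' k, chi A k * pois lam k := by
  have h0 : poissonProb lam A = ∑' k : A, pois lam (k : ℕ) := rfl
  rw [h0, tsum_subtype A (fun k => pois lam k)]
  congr 1; funext k
  unfold chi pois Set.indicator
  split <;> simp

lemma tail_eq (n : ℕ) : 1 - Fc lam n = ∑' i, pois lam (i + n) := by
  have := Summable.sum_add_tsum_nat_add (f := pois lam) n summable_pois
  rw [tsum_pois] at this
  unfold Fc
  linarith

lemma tail_nonneg (hl : 0 < lam) (n : ℕ) : 0 ≤ 1 - Fc lam n := by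
  rw [tail_eq]
  exact tsum_nonneg fun i => (pois_pos hl _).le

lemma Fc_nonneg (hl : 0 < lam) (n : ℕ) : 0 ≤ Fc lam n :=
  Finset.sum_nonneg fun k _ => (pois_pos hl k).le

lemma pois_succ (k : ℕ) : ((k : ℝ) + 1) * pois lam (k + 1) = lam * pois lam k := by
  unfold pois
  rw [Nat.factorial_succ]
  push_cast
  have h1 : ((Nat.factorial k : ℝ)) ≠ 0 := Nat.cast_ne_zero.2 (Nat.factorial_ne_zero k)
  have h2 : ((k : ℝ) + 1) ≠ 0 := by positivity
  field_simp
  ring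

lemma lam_Fc_le (hl : 0 < lam) (n : ℕ) : lam * Fc lam n ≤ (n : ℝ) * Fc lam (n + 1) := by
  have h1 : lam * Fc lam n = ∑ k ∈ range n, ((k : ℝ) + 1) * pois lam (k + 1) := by
    unfold Fc
    rw [Finset.mul_sum]
    exact Finset.sum_congr rfl fun k _ => (pois_succ k).symm
  rw [h1]
  have h2 : ∑ k ∈ range n, ((k : ℝ) + 1) * pois lam (k + 1) ≤
      ∑ k ∈ range n, (n : ℝ) * pois lam (k + 1) := by
    refine Finset.sum_le_sum fun k hk => ?_
    have hk' : (k : ℝ) + 1 ≤ n := by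
      have := Finset.mem_range.1 hk; exact_mod_cast this
    exact mul_le_mul_of_nonneg_right hk' (pois_pos hl _).le
  refine h2.trans ?_
  rw [← Finset.mul_sum]
  refine mul_le_mul_of_nonneg_left ?_ (Nat.cast_nonneg n)
  have h3 : Fc lam (n + 1) = (∑ k ∈ range n, pois lam (k + 1)) + pois lam 0 :=
    Finset.sum_range_succ' (pois lam) n
  have := (pois_pos hl 0).le
  linarith

lemma tail_ineq (hl : 0 < lam) (n : ℕ) :
    ((n : ℝ) + 1) * (1 - Fc lam (n + 1)) ≤ lam * (1 - Fc lam n) := by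
  rw [tail_eq, tail_eq]
  rw [← tsum_mul_left, ← tsum_mul_left]
  refine Summable.tsum_le_tsum (fun i => ?_)
    (((summable_nat_add_iff (n+1)).mpr summable_pois).mul_left _)
    (((summable_nat_add_iff n).mpr summable_pois).mul_left _)
  · have key := pois_succ (lam := lam) (i + n)
    have e : i + (n + 1) = (i + n) + 1 := by omega
    rw [e]
    have h1 : ((n : ℝ) + 1) * pois lam ((i + n) + 1) ≤ ((i + n : ℕ) + 1 : ℝ) * pois lam ((i + n) + 1) := by
      refine mul_le_mul_of_nonneg_right ?_ (pois_pos hl _).le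
      push_cast; linarith [Nat.cast_nonneg (α := ℝ) i]
    calc ((n:ℝ)+1) * pois lam ((i + n) + 1) ≤ _ := h1
      _ = lam * pois lam (i + n) := key

end analytic

section closed
variable {lam : ℝ}

lemma exp_mul_exp_neg : Real.exp lam * Real.exp (-lam) = 1 := by
  rw [← Real.exp_add]; simp

lemma steinG_closed (hl : 0 < lam) (A : Set ℕ) (j : ℕ) :
    steinG lam A (j+1) = (Nat.factorial j : ℝ) * Real.exp lam / lam^(j+1) *
      (PAc lam A (j+1) - poissonProb lam A * Fc lam (j+1)) := by
  have hlne : lam ≠ 0 := ne_of_gt hl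
  have hexpne : Real.exp lam ≠ 0 := (Real.exp_pos lam).ne'
  induction j with
  | zero =>
    show (chi A 0 - poissonProb lam A + (0:ℕ) * steinG lam A 0) / lam = _
    simp only [PAc, Fc, zero_add, Finset.sum_range_one, pois, pow_zero, Nat.factorial_zero,
      Nat.cast_one, Real.exp_neg, Nat.cast_zero, zero_mul, add_zero, pow_one]
    field_simp
  | succ j ih =>
    have hg : steinG lam A (j+2) =
        (chi A (j+1) - poissonProb lam A + ((j+1 : ℕ) : ℝ) * steinG lam A (j+1)) / lam := rfl
    rw [hg, ih]
    have hP : PAc lam A (j+2) = PAc lam A (j+1) + chi A (j+1) * pois lam (j+1) := by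
      unfold PAc; rw [Finset.sum_range_succ]
    have hF : Fc lam (j+2) = Fc lam (j+1) + pois lam (j+1) := by
      unfold Fc; rw [Finset.sum_range_succ]
    rw [hP, hF]
    simp only [pois, Real.exp_neg, Nat.factorial_succ]
    have hfacne : ((Nat.factorial j : ℝ)) ≠ 0 := Nat.cast_ne_zero.2 (Nat.factorial_ne_zero j)
    have hfacne2 : ((Nat.factorial (j+1) : ℝ)) ≠ 0 := Nat.cast_ne_zero.2 (Nat.factorial_ne_zero _)
    have hpowne : lam ^ (j+1) ≠ 0 := pow_ne_zero _ hlne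
    push_cast
    field_simp
    ring

lemma Q_sub_PAc (hl : 0 < lam) (A : Set ℕ) (n : ℕ) :
    0 ≤ poissonProb lam A - PAc lam A n ∧
      poissonProb lam A - PAc lam A n ≤ 1 - Fc lam n := by
  have hs := summable_chipois hl A
  have h := Summable.sum_add_tsum_nat_add (f := fun k => chi A k * pois lam k) n hs
  rw [← poissonProb_eq] at h
  have hPA : PAc lam A n = ∑ i ∈ range n, chi A i * pois lam i := rfl
  have htail : poissonProb lam A - PAc lam A n = ∑' i, chi A (i + n) * pois lam (i + n) := by
    rw [hPA]; linarith
  constructor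
  · rw [htail]
    exact tsum_nonneg fun i => mul_nonneg (chi_nonneg A _) (pois_pos hl _).le
  · rw [htail, tail_eq]
    refine Summable.tsum_le_tsum (fun i => ?_) ((summable_nat_add_iff n).mpr hs)
      ((summable_nat_add_iff n).mpr summable_pois)
    calc chi A (i+n) * pois lam (i+n) ≤ 1 * pois lam (i+n) :=
          mul_le_mul_of_nonneg_right (chi_le_one A _) (pois_pos hl _).le
      _ = pois lam (i+n) := one_mul _

set_option maxHeartbeats 1000000 in
lemma steinG_diff_bound (hl : 0 < lam) (A : Set ℕ) (j : ℕ) :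
    |steinG lam A (j+2) - steinG lam A (j+1)| ≤ min 1 (1/lam) := by
  have hlne : lam ≠ 0 := ne_of_gt hl
  have hexpne : Real.exp lam ≠ 0 := (Real.exp_pos lam).ne'
  set F1 := Fc lam (j+1) with hF1def
  set F2 := Fc lam (j+2) with hF2def
  set P1 := PAc lam A (j+1) with hP1def
  set P2 := PAc lam A (j+2) with hP2def
  set Q := poissonProb lam A with hQdef
  set c := chi A (j+1) with hcdef
  set π1 := pois lam (j+1) with hπdef
  set α := (Nat.factorial (j+1) : ℝ) * Real.exp lam / lam^(j+2) with hαdef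
  set β := (Nat.factorial j : ℝ) * Real.exp lam / lam^(j+1) with hβdef
  have hfacne : ((Nat.factorial j : ℝ)) ≠ 0 := Nat.cast_ne_zero.2 (Nat.factorial_ne_zero j)
  have hfacne2 : ((Nat.factorial (j+1) : ℝ)) ≠ 0 := Nat.cast_ne_zero.2 (Nat.factorial_ne_zero _)
  have hαπ : α * π1 = 1/lam := by
    rw [hαdef, hπdef]
    simp only [pois, Real.exp_neg]
    field_simp
    ring
  have hβπ : β * π1 = 1/((j:ℝ)+1) := by
    rw [hβdef, hπdef]
    simp only [pois, Real.exp_neg, Nat.factorial_succ]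
    push_cast
    field_simp
  have hαβ : lam * α = ((j:ℝ)+1) * β := by
    rw [hαdef, hβdef, Nat.factorial_succ]
    push_cast
    field_simp
    ring
  have hαpos : 0 < α := by
    rw [hαdef]; positivity
  have hβpos : 0 < β := by
    rw [hβdef]; positivity
  have hπpos : 0 < π1 := pois_pos hl _
  have hT1 : 0 ≤ 1 - F1 := tail_nonneg hl _
  have hT2 : 0 ≤ 1 - F2 := tail_nonneg hl _
  have hF1n : 0 ≤ F1 := Fc_nonneg hl _
  have hj0 : (0:ℝ) ≤ (j:ℝ) := Nat.cast_nonneg j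
  have hj1 : (0:ℝ) < (j:ℝ) + 1 := by positivity
  have hFF : lam * F1 ≤ ((j:ℝ)+1) * F2 := by
    have h := lam_Fc_le hl (j+1)
    push_cast at h
    exact h
  have hTT : ((j:ℝ)+2) * (1 - F2) ≤ lam * (1 - F1) := by
    have h := tail_ineq hl (j+1)
    push_cast at h
    convert h using 2 <;> push_cast <;> ring
  -- derived sign facts
  have hX : 0 ≤ α * F2 - β * F1 := by
    have h1 : lam * (β * F1) ≤ lam * (α * F2) := by
      calc lam * (β * F1) = β * (lam * F1) := by ring
        _ ≤ β * (((j:ℝ)+1) * F2) := mul_le_mul_of_nonneg_left hFF hβpos.le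
        _ = (lam * α) * F2 := by rw [hαβ]; ring
        _ = lam * (α * F2) := by ring
    have h2 := (mul_le_mul_iff_right₀ hl).mp h1
    linarith
  have hγ : α * (1 - F2) - β * (1 - F1) ≤ 0 := by
    have e : ((j:ℝ)+2) * (1 - F2) = ((j:ℝ)+1) * (1 - F2) + (1 - F2) := by ring
    have h1 : ((j:ℝ)+1) * (1 - F2) ≤ lam * (1 - F1) := by linarith
    have h2 : lam * (α * (1 - F2)) ≤ lam * (β * (1 - F1)) := by
      calc lam * (α * (1 - F2)) = (lam * α) * (1 - F2) := by ring
        _ = β * (((j:ℝ)+1) * (1 - F2)) := by rw [hαβ]; ring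
        _ ≤ β * (lam * (1 - F1)) := mul_le_mul_of_nonneg_left h1 hβpos.le
        _ = lam * (β * (1 - F1)) := by ring
    exact sub_nonpos.mpr ((mul_le_mul_iff_right₀ hl).mp h2)
  have hκ : 0 ≤ α * (1 - F2) + β * F1 := by
    have h1 := mul_nonneg hαpos.le hT2
    have h2 := mul_nonneg hβpos.le hF1n
    linarith
  -- the bound on π1 * κ
  have hκb : π1 * (α * (1 - F2) + β * F1) ≤ min 1 (1/lam) := by
    have e1 : π1 * (α * (1 - F2) + β * F1) = (1 - F2) * (1/lam) + F1 * (1/((j:ℝ)+1)) := by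
      rw [← hαπ, ← hβπ]; ring
    rw [e1]
    refine le_min ?_ ?_
    · -- ≤ 1
      have h1 : (1 - F2) * (1/lam) ≤ 1 - F1 := by
        rw [mul_one_div, div_le_iff₀ hl]
        have := mul_nonneg (by positivity : (0:ℝ) ≤ (j:ℝ)+1) hT2
        have e : ((j:ℝ)+2) * (1 - F2) = ((j:ℝ)+1) * (1 - F2) + (1 - F2) := by ring
        have e2 : (1 - F1) * lam = lam * (1 - F1) := by ring
        linarith
      have h2 : F1 * (1/((j:ℝ)+1)) ≤ F1 := by
        rw [mul_one_div, div_le_iff₀ hj1]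
        have := mul_nonneg hF1n hj0
        have e : F1 * ((j:ℝ)+1) = F1 * (j:ℝ) + F1 := by ring
        linarith
      linarith
    · -- ≤ 1/lam
      have h1 : F1 * (1/((j:ℝ)+1)) ≤ F2 * (1/lam) := by
        rw [mul_one_div, mul_one_div, div_le_div_iff₀ hj1 hl]
        have e1 : F1 * lam = lam * F1 := by ring
        have e2 : F2 * ((j:ℝ)+1) = ((j:ℝ)+1) * F2 := by ring
        linarith
      have h2 : (1 - F2) * (1/lam) + F2 * (1/lam) = 1/lam := by ring
      linarith
  -- closed forms
  have f2 : steinG lam A (j+2) = α * (P2 - Q * F2) := steinG_closed hl A (j+1)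
  have f1 : steinG lam A (j+1) = β * (P1 - Q * F1) := steinG_closed hl A j
  have hP : P2 = P1 + c * π1 := by
    rw [hP2def, hP1def, hπdef, hcdef]; unfold PAc; rw [Finset.sum_range_succ]
  have hF : F2 = F1 + π1 := by
    rw [hF2def, hF1def, hπdef]; unfold Fc; rw [Finset.sum_range_succ]
  obtain ⟨hTA0, hTA1⟩ := Q_sub_PAc hl A (j+2)
  simp only [← hQdef, ← hP2def, ← hF2def] at hTA0 hTA1
  have hP1nn : 0 ≤ P1 := Finset.sum_nonneg fun k _ =>
    mul_nonneg (chi_nonneg A k) (pois_pos hl k).le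
  have hP1F : P1 ≤ F1 := by
    refine Finset.sum_le_sum fun k _ => ?_
    calc chi A k * pois lam k ≤ 1 * pois lam k :=
          mul_le_mul_of_nonneg_right (chi_le_one A k) (pois_pos hl k).le
      _ = pois lam k := one_mul _
  have hc0 : 0 ≤ c := chi_nonneg A _
  have hc1 : c ≤ 1 := chi_le_one A _
  set TA := Q - P2 with hTAdef
  set X := α * F2 - β * F1 with hXdef
  set γ := α * (1 - F2) - β * (1 - F1) with hγdef
  set κ := α * (1 - F2) + β * F1 with hκdef
  have hΔ : steinG lam A (j+2) - steinG lam A (j+1)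
      = P1 * γ + c * π1 * κ - TA * X := by
    rw [f1, f2]
    have hQ : Q = P1 + c * π1 + TA := by rw [hTAdef, hP]; ring
    rw [hP, hQ, hXdef, hγdef, hκdef]
    ring
  have hid : F1 * γ + π1 * κ - (1 - F2) * X = 0 := by
    have hπe : π1 = F2 - F1 := by rw [hF]; ring
    rw [hπe, hγdef, hκdef, hXdef]
    ring
  clear_value TA X γ κ F1 F2 P1 P2 Q c π1 α β
  rw [hΔ, abs_le]
  have hπκ : 0 ≤ π1 * κ := mul_nonneg hπpos.le hκ
  constructor
  · -- lower bound
    have t1 : F1 * γ ≤ P1 * γ := by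
      have h := mul_nonpos_of_nonneg_of_nonpos (by linarith : (0:ℝ) ≤ F1 - P1) hγ
      have e : (F1 - P1) * γ = F1 * γ - P1 * γ := by ring
      linarith
    have t2 : 0 ≤ c * π1 * κ := by
      have := mul_nonneg (mul_nonneg hc0 hπpos.le) hκ
      linarith
    have t3 : TA * X ≤ (1 - F2) * X := by
      have h := mul_nonneg (by linarith : (0:ℝ) ≤ (1 - F2) - TA) hX
      have e : ((1 - F2) - TA) * X = (1 - F2) * X - TA * X := by ring
      linarith
    have hmin : min 1 (1/lam) ≤ 1 ∧ 0 ≤ min 1 (1/lam) := by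
      constructor
      · exact min_le_left _ _
      · exact le_min (by norm_num) (by positivity)
    have key : -(π1 * κ) ≤ P1 * γ + c * π1 * κ - TA * X := by linarith
    have hκb' : π1 * κ ≤ min 1 (1/lam) := hκb
    linarith [key, hκb']
  · -- upper bound
    have t1 : P1 * γ ≤ 0 := mul_nonpos_of_nonneg_of_nonpos hP1nn hγ
    have t2 : c * π1 * κ ≤ π1 * κ := by
      have h := mul_nonneg (by linarith : (0:ℝ) ≤ 1 - c) hπκ
      have e : (1 - c) * (π1 * κ) = π1 * κ - c * π1 * κ := by ring
      linarith
    have t3 : 0 ≤ TA * X := mul_nonneg hTA0 hX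
    have hκb' : π1 * κ ≤ min 1 (1/lam) := hκb
    calc P1 * γ + c * π1 * κ - TA * X ≤ π1 * κ := by linarith
      _ ≤ min 1 (1/lam) := hκb'

end closed

section lipschitz
variable {lam : ℝ}

lemma steinG_eq (hl : 0 < lam) (A : Set ℕ) (n : ℕ) :
    chi A n - poissonProb lam A = lam * steinG lam A (n+1) - (n:ℝ) * steinG lam A n := by
  have h : steinG lam A (n+1) = (chi A n - poissonProb lam A + (n:ℝ) * steinG lam A n)/lam := rfl
  rw [h]
  field_simp
  ring

lemma min_nonneg' (hl : 0 < lam) : 0 ≤ min 1 (1/lam) :=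
  le_min (by norm_num) (by positivity)

lemma steinG_lipschitz (hl : 0 < lam) (A : Set ℕ) (a b : ℕ) :
    |steinG lam A (a+1) - steinG lam A (b+1)| ≤ min 1 (1/lam) * |(a:ℝ) - (b:ℝ)| := by
  have key : ∀ d b : ℕ, |steinG lam A (b+1+d) - steinG lam A (b+1)| ≤ min 1 (1/lam) * d := by
    intro d
    induction d with
    | zero => intro b; simp
    | succ d ih =>
      intro b
      have h1 := ih b
      have h2 := steinG_diff_bound hl A (b+d)
      have e1 : b + 1 + (d+1) = (b+d) + 2 := by omega
      have e2 : b + 1 + d = (b+d) + 1 := by omega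
      rw [e1]
      rw [e2] at h1
      push_cast
      calc |steinG lam A (b+d+2) - steinG lam A (b+1)|
          ≤ |steinG lam A (b+d+2) - steinG lam A (b+d+1)|
            + |steinG lam A (b+d+1) - steinG lam A (b+1)| :=
            abs_sub_le _ _ _
        _ ≤ min 1 (1/lam) + min 1 (1/lam) * d := add_le_add h2 h1
        _ = min 1 (1/lam) * ((d:ℝ) + 1) := by ring
  rcases le_total b a with h | h
  · obtain ⟨d, rfl⟩ := Nat.exists_eq_add_of_le h
    have := key d b
    have e : b + 1 + d = b + d + 1 := by omega
    rw [e] at this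
    have e2 : |((b+d : ℕ):ℝ) - (b:ℝ)| = (d:ℝ) := by
      push_cast
      have e3 : (b:ℝ) + d - b = d := by ring
      rw [e3, abs_of_nonneg (Nat.cast_nonneg d)]
    rw [e2]
    exact this
  · obtain ⟨d, rfl⟩ := Nat.exists_eq_add_of_le h
    have := key d a
    have e : a + 1 + d = a + d + 1 := by omega
    rw [e] at this
    have e2 : |(a:ℝ) - ((a+d : ℕ):ℝ)| = (d:ℝ) := by
      push_cast
      rw [abs_sub_comm]
      have e3 : (a:ℝ) + d - a = d := by ring
      rw [e3, abs_of_nonneg (Nat.cast_nonneg d)]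
    rw [e2, abs_sub_comm]
    exact this

end lipschitz

section prob
variable {Ω : Type*} [MeasureSpace Ω] [IsProbabilityMeasure (ℙ : Measure Ω)]

lemma meas_comp_nat {β : Type*} [MeasurableSpace β] (f : ℕ → β) {X : Ω → ℕ}
    (hX : Measurable X) : Measurable fun ω => f (X ω) :=
  (measurable_from_top (f := f)).comp hX

lemma integral_comp_nat (X : Ω → ℕ) (hX : Measurable X) (f : ℕ → ℝ) (N : ℕ)
    (hb : ∀ᵐ ω ∂(ℙ : Measure Ω), X ω ≤ N) :
    ∫ ω, f (X ω) = ∑ n ∈ Finset.range (N+1), f n * (ℙ {ω | X ω = n}).toReal := by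
  have hmeas : ∀ n : ℕ, MeasurableSet {ω | X ω = n} := fun n => hX (measurableSet_singleton n)
  have hae : (fun ω => f (X ω)) =ᵐ[(ℙ : Measure Ω)]
      (fun ω => ∑ n ∈ Finset.range (N+1),
        Set.indicator {ω' | X ω' = n} (fun _ => f n) ω) := by
    filter_upwards [hb] with ω hω
    rw [Finset.sum_eq_single_of_mem (X ω) (Finset.mem_range.mpr (Nat.lt_succ_of_le hω))
      (fun b _ hbne => Set.indicator_of_notMem (fun hmem => hbne (hmem.symm)) _)]
    rw [Set.indicator_of_mem (show ω ∈ {ω' | X ω' = X ω} from rfl)]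
  rw [integral_congr_ae hae,
    integral_finset_sum _ (fun n _ => (integrable_const (f n)).indicator (hmeas n))]
  refine Finset.sum_congr rfl fun n _ => ?_
  rw [integral_indicator_const _ (hmeas n), smul_eq_mul, mul_comm]
  rfl

lemma integrable_comp_nat (X : Ω → ℕ) (hX : Measurable X) (f : ℕ → ℝ) (N : ℕ)
    (hb : ∀ᵐ ω ∂(ℙ : Measure Ω), X ω ≤ N) :
    Integrable (fun ω => f (X ω)) := by
  refine Integrable.mono' (integrable_const (∑ n ∈ Finset.range (N+1), |f n|))
    (meas_comp_nat f hX).aestronglyMeasurable ?_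
  filter_upwards [hb] with ω hω
  rw [Real.norm_eq_abs]
  exact Finset.single_le_sum (f := fun n => |f n|) (fun n _ => abs_nonneg _)
    (Finset.mem_range.mpr (Nat.lt_succ_of_le hω))

lemma integral_bernoulli_mul_comp (X : Ω → ℕ) (hX : Measurable X) (Yk : Ω → ℕ)
    (hYk : Measurable Yk) (hYk01 : ∀ ω, Yk ω = 0 ∨ Yk ω = 1) (f : ℕ → ℝ) (N : ℕ)
    (hb : ∀ ω, X ω ≤ N) :
    ∫ ω, (Yk ω : ℝ) * f (X ω)
      = ∑ n ∈ Finset.range (N+1), f n * (ℙ ({ω | X ω = n} ∩ {ω | Yk ω = 1})).toReal := by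
  have hmeas : ∀ n : ℕ, MeasurableSet ({ω | X ω = n} ∩ {ω | Yk ω = 1}) :=
    fun n => (hX (measurableSet_singleton n)).inter (hYk (measurableSet_singleton 1))
  have heq : ∀ ω, (Yk ω : ℝ) * f (X ω)
      = ∑ n ∈ Finset.range (N+1),
          Set.indicator ({ω' | X ω' = n} ∩ {ω' | Yk ω' = 1}) (fun _ => f n) ω := by
    intro ω
    rcases hYk01 ω with h0 | h1
    · rw [h0]
      push_cast
      rw [zero_mul]
      symm
      refine Finset.sum_eq_zero fun n _ => Set.indicator_of_notMem ?_ _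
      rintro ⟨-, hmem2⟩
      simp only [Set.mem_setOf_eq] at hmem2
      omega
    · rw [h1]
      push_cast
      rw [one_mul]
      symm
      rw [Finset.sum_eq_single_of_mem (X ω) (Finset.mem_range.mpr (Nat.lt_succ_of_le (hb ω)))
        (fun b _ hbne => Set.indicator_of_notMem (fun hmem => hbne (hmem.1.symm)) _)]
      rw [Set.indicator_of_mem (show ω ∈ {ω' | X ω' = X ω} ∩ {ω' | Yk ω' = 1} from ⟨rfl, h1⟩)]
  rw [integral_congr_ae (Filter.EventuallyEq.of_eq (funext heq)),
    integral_finset_sum _ (fun n _ => (integrable_const (f n)).indicator (hmeas n))]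
  refine Finset.sum_congr rfl fun n _ => ?_
  rw [integral_indicator_const _ (hmeas n), smul_eq_mul, mul_comm]
  rfl

lemma integrable_bernoulli_mul_comp (X : Ω → ℕ) (hX : Measurable X) (Yk : Ω → ℕ)
    (hYk : Measurable Yk) (hYk01 : ∀ ω, Yk ω = 0 ∨ Yk ω = 1) (f : ℕ → ℝ) (N : ℕ)
    (hb : ∀ ω, X ω ≤ N) :
    Integrable (fun ω => (Yk ω : ℝ) * f (X ω)) := by
  refine Integrable.mono' (integrable_const (∑ n ∈ Finset.range (N+1), |f n|))
    ((meas_comp_nat (fun n => (n:ℝ)) hYk).mul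
      (meas_comp_nat f hX)).aestronglyMeasurable ?_
  refine Filter.Eventually.of_forall fun ω => ?_
  rw [Real.norm_eq_abs, abs_mul]
  have h1 : |(Yk ω : ℝ)| ≤ 1 := by
    rcases hYk01 ω with h | h <;> rw [h] <;> norm_num
  have h2 : |f (X ω)| ≤ ∑ n ∈ Finset.range (N+1), |f n| :=
    Finset.single_le_sum (f := fun n => |f n|) (fun n _ => abs_nonneg _)
      (Finset.mem_range.mpr (Nat.lt_succ_of_le (hb ω)))
  calc |(Yk ω : ℝ)| * |f (X ω)| ≤ 1 * |f (X ω)| :=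
        mul_le_mul_of_nonneg_right h1 (abs_nonneg _)
    _ = |f (X ω)| := one_mul _
    _ ≤ _ := h2

end prob

lemma pois_zero (k : ℕ) : pois 0 k = if k = 0 then (1:ℝ) else 0 := by
  unfold pois
  cases k with
  | zero => simp
  | succ k => simp [zero_pow]

lemma poissonProb_zero (A : Set ℕ) : poissonProb 0 A = chi A 0 := by
  rw [poissonProb_eq]
  rw [tsum_eq_single 0]
  · rw [pois_zero]; simp
  · intro k hk
    rw [pois_zero]
    simp [hk]

/-- **Chen–Stein bound for sums of (possibly dependent) Bernoulli random variables.**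
Let `W = Y₁ + ⋯ + Y_l` with `Y_i` Bernoulli of mean `p_i` (no independence assumed),
and let `Z` be Poisson with mean `λ = ∑ p_i`.  If `U_k ~ W` and `1 + V_k ~ (W | Y_k = 1)`
are defined on the same space, then
`d_TV(W, Z) ≤ (1 ∧ 1/λ) ∑ p_i E|U_i − V_i|`. -/
theorem chen_stein_bernoulli_sum
    {Ω : Type*} [MeasureSpace Ω] [IsProbabilityMeasure (ℙ : Measure Ω)]
    (l : ℕ) (Y : Fin l → Ω → ℕ)
    (hYmeas : ∀ i, Measurable (Y i))
    (hY01 : ∀ i ω, Y i ω = 0 ∨ Y i ω = 1)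
    (p : Fin l → ℝ) (hp : ∀ i, (ℙ {ω | Y i ω = 1}).toReal = p i)
    (W : Ω → ℕ) (hWdef : ∀ ω, W ω = ∑ i : Fin l, Y i ω)
    (lam : ℝ) (hlam : lam = ∑ i : Fin l, p i)
    (U V : Fin l → Ω → ℕ)
    (hUmeas : ∀ k, Measurable (U k)) (hVmeas : ∀ k, Measurable (V k))
    -- `U_k` has the distribution of `W`
    (hU : ∀ k, ∀ A : Set ℕ, ℙ {ω | U k ω ∈ A} = ℙ {ω | W ω ∈ A})
    -- `1 + V_k` has the distribution of `W` conditioned on `{Y_k = 1}`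
    (hV : ∀ k, ∀ A : Set ℕ,
      ℙ {ω | V k ω + 1 ∈ A} * ℙ {ω | Y k ω = 1}
        = ℙ ({ω | W ω ∈ A} ∩ {ω | Y k ω = 1}))
    -- convention: `V_k = 0` when `P(Y_k = 1) = 0`
    (hV0 : ∀ k, ℙ {ω | Y k ω = 1} = 0 → ∀ᵐ ω ∂(ℙ : Measure Ω), V k ω = 0) :
    ∀ A : Set ℕ,
      |(ℙ {ω | W ω ∈ A}).toReal - poissonProb lam A|
        ≤ min 1 (1 / lam) * ∑ i : Fin l, p i * ∫ ω, |(U i ω : ℝ) - (V i ω : ℝ)| := by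
  intro A
  have hp0 : ∀ i, 0 ≤ p i := fun i => (hp i) ▸ ENNReal.toReal_nonneg
  have hWmeas : Measurable W := by
    have he : W = fun ω => ∑ i : Fin l, Y i ω := funext hWdef
    rw [he]
    exact Finset.measurable_sum _ (fun i _ => hYmeas i)
  have hWle : ∀ ω, W ω ≤ l := by
    intro ω; rw [hWdef ω]
    calc ∑ i : Fin l, Y i ω ≤ ∑ _i : Fin l, 1 :=
          Finset.sum_le_sum (fun i _ => by rcases hY01 i ω with h|h <;> omega)
      _ = l := by simp
  rcases lt_or_ge 0 lam with hl | hl0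
  swap
  · -- degenerate case lam = 0
    have hlam0 : lam = 0 :=
      le_antisymm hl0 (hlam ▸ Finset.sum_nonneg fun i _ => hp0 i)
    have hpz : ∀ i, p i = 0 := by
      intro i
      have hsum : ∑ i : Fin l, p i = 0 := by rw [← hlam, hlam0]
      exact (Finset.sum_eq_zero_iff_of_nonneg (fun i _ => hp0 i)).mp hsum i (Finset.mem_univ i)
    have hY0 : ∀ i, (ℙ {ω | Y i ω = 1}) = 0 := by
      intro i
      have h1 := hp i; rw [hpz i] at h1
      have hne : (ℙ {ω | Y i ω = 1}) ≠ ⊤ := measure_ne_top _ _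
      exact ((ENNReal.toReal_eq_zero_iff _).mp h1).resolve_right hne
    have hW0 : ∀ᵐ ω ∂(ℙ:Measure Ω), W ω = 0 := by
      have hall : ∀ᵐ ω ∂(ℙ:Measure Ω), ∀ i : Fin l, Y i ω = 0 := by
        rw [MeasureTheory.ae_all_iff]
        intro i
        rw [ae_iff]
        convert hY0 i using 2
        ext ω
        simp only [Set.mem_setOf_eq]
        rcases hY01 i ω with h|h <;> simp [h]
      filter_upwards [hall] with ω hω
      rw [hWdef ω]; exact Finset.sum_eq_zero fun i _ => hω i
    have hR : min 1 (1/lam) * ∑ i : Fin l, p i * ∫ ω, |(U i ω : ℝ) - (V i ω : ℝ)| = 0 := by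
      rw [hlam0]; norm_num
    rw [hR]
    have hWn0 : ℙ {ω | ¬ W ω = 0} = 0 := by rw [← ae_iff]; exact hW0
    have hL : (ℙ {ω | W ω ∈ A}).toReal = poissonProb lam A := by
      rw [hlam0, poissonProb_zero]
      by_cases h0 : (0:ℕ) ∈ A
      · have h1 : ℙ {ω | W ω = 0} = 1 := by
          rw [← prob_compl_eq_zero_iff
            (show MeasurableSet {ω | W ω = 0} from hWmeas (measurableSet_singleton 0))]
          rw [Set.compl_setOf]
          convert hWn0 using 2
        have hsub : {ω | W ω = 0} ⊆ {ω | W ω ∈ A} := by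
          intro ω hω
          simp only [Set.mem_setOf_eq] at *
          rw [hω]; exact h0
        have h2 : ℙ {ω | W ω ∈ A} = 1 :=
          le_antisymm prob_le_one (h1 ▸ measure_mono hsub)
        rw [h2]
        simp [chi, h0]
      · have hsub : {ω | W ω ∈ A} ⊆ {ω | ¬ W ω = 0} := by
          intro ω hω
          simp only [Set.mem_setOf_eq] at *
          intro he; rw [he] at hω; exact h0 hω
        have h2 : ℙ {ω | W ω ∈ A} = 0 :=
          le_antisymm (hWn0 ▸ measure_mono hsub) zero_le
        rw [h2]
        simp [chi, h0]
    rw [hL, sub_self, abs_zero]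
  · -- main case 0 < lam
    set g : ℕ → ℝ := steinG lam A with hgdef
    have hc0 : (0:ℝ) ≤ min 1 (1/lam) := min_nonneg' hl
    set Q := poissonProb lam A with hQdef
    have hWae : ∀ᵐ ω ∂(ℙ:Measure Ω), W ω ≤ l := Filter.Eventually.of_forall hWle
    have hUle : ∀ k, ∀ᵐ ω ∂(ℙ:Measure Ω), U k ω ≤ l := by
      intro k
      have h := hU k {n | l < n}
      have hempty : {ω | W ω ∈ {n | l < n}} = (∅ : Set Ω) := by
        ext ω
        simp only [Set.mem_setOf_eq, Set.mem_empty_iff_false, iff_false]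
        exact not_lt.mpr (hWle ω)
      rw [hempty, measure_empty] at h
      rw [ae_iff]
      convert h using 2
      ext ω; simp [not_le]
    have hVle : ∀ k, (ℙ {ω | Y k ω = 1}) ≠ 0 → ∀ᵐ ω ∂(ℙ:Measure Ω), V k ω + 1 ≤ l := by
      intro k hm
      have h := hV k {n | l < n}
      have hempty : ({ω | W ω ∈ {n | l < n}} ∩ {ω | Y k ω = 1}) = (∅:Set Ω) := by
        ext ω
        simp only [Set.mem_setOf_eq, Set.mem_inter_iff, Set.mem_empty_iff_false, iff_false]
        rintro ⟨h1, -⟩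
        exact (not_lt.mpr (hWle ω)) h1
      rw [hempty, measure_empty] at h
      have h0 : ℙ {ω | V k ω + 1 ∈ {n | l < n}} = 0 :=
        (mul_eq_zero.mp h).resolve_right hm
      rw [ae_iff]
      convert h0 using 2
      ext ω; simp [not_le]
    set SW := ∑ n ∈ Finset.range (l+1), g (n+1) * (ℙ {ω | W ω = n}).toReal with hSWdef
    have hEW1 : ∫ ω, g (W ω + 1) = SW :=
      integral_comp_nat W hWmeas (fun n => g (n+1)) l hWae
    have hEU : ∀ k, ∫ ω, g (U k ω + 1) = SW := by
      intro k
      rw [integral_comp_nat (U k) (hUmeas k) (fun n => g (n+1)) l (hUle k)]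
      refine Finset.sum_congr rfl fun n _ => ?_
      congr 2
      exact hU k {n}
    have hIntChi : Integrable (fun ω => chi A (W ω)) :=
      integrable_comp_nat W hWmeas (chi A) l hWae
    have hIntGW1 : Integrable (fun ω => g (W ω + 1)) :=
      integrable_comp_nat W hWmeas (fun n => g (n+1)) l hWae
    have hIntWGW : Integrable (fun ω => (W ω : ℝ) * g (W ω)) :=
      integrable_comp_nat W hWmeas (fun n => (n:ℝ) * g n) l hWae
    have hchiInt : ∫ ω, chi A (W ω) = (ℙ {ω | W ω ∈ A}).toReal := by
      have he : (fun ω => chi A (W ω))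
          = fun ω => Set.indicator {ω' | W ω' ∈ A} (fun _ => (1:ℝ)) ω := by
        funext ω
        by_cases h : W ω ∈ A
        · rw [Set.indicator_of_mem (show ω ∈ {ω' | W ω' ∈ A} from h)]
          simp [chi, h]
        · rw [Set.indicator_of_notMem (show ω ∉ {ω' | W ω' ∈ A} from h)]
          simp [chi, h]
      have hms : MeasurableSet {ω | W ω ∈ A} := hWmeas (show MeasurableSet A from trivial)
      rw [he, integral_indicator_const _ hms, smul_eq_mul, mul_one]
      rfl
    have hpoint : ∀ ω, chi A (W ω) - Q = lam * g (W ω + 1) - (W ω : ℝ) * g (W ω) :=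
      fun ω => steinG_eq hl A (W ω)
    have hmain1 : (ℙ {ω | W ω ∈ A}).toReal - Q
        = lam * SW - ∫ ω, (W ω : ℝ) * g (W ω) := by
      have h1 : ∫ ω, (chi A (W ω) - Q) = (ℙ {ω | W ω ∈ A}).toReal - Q := by
        rw [integral_sub hIntChi (integrable_const Q), hchiInt, integral_const]
        simp
      have h2 : ∫ ω, (chi A (W ω) - Q)
          = lam * SW - ∫ ω, (W ω:ℝ) * g (W ω) := by
        rw [integral_congr_ae (Filter.EventuallyEq.of_eq (funext hpoint)),
          integral_sub (hIntGW1.const_mul lam) hIntWGW, integral_const_mul, hEW1]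
      linarith [h1, h2]
    have hWgW : ∫ ω, (W ω:ℝ) * g (W ω) = ∑ i : Fin l, ∫ ω, (Y i ω : ℝ) * g (W ω) := by
      have he : (fun ω => (W ω:ℝ) * g (W ω))
          = fun ω => ∑ i : Fin l, (Y i ω : ℝ) * g (W ω) := by
        funext ω
        rw [← Finset.sum_mul]
        congr 1
        rw [hWdef ω]
        push_cast
        rfl
      rw [he]
      exact integral_finset_sum _ fun i _ =>
        integrable_bernoulli_mul_comp W hWmeas (Y i) (hYmeas i) (hY01 i) g l hWle
    have hYg : ∀ k : Fin l, ∫ ω, (Y k ω : ℝ) * g (W ω) = p k * ∫ ω, g (V k ω + 1) := by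
      intro k
      by_cases hpk : (ℙ {ω | Y k ω = 1}) = 0
      · have hpk0 : p k = 0 := by rw [← hp k, hpk]; simp
        have hae : (fun ω => (Y k ω : ℝ) * g (W ω)) =ᵐ[(ℙ:Measure Ω)] (fun _ => (0:ℝ)) := by
          rw [Filter.EventuallyEq, ae_iff]
          refine measure_mono_null ?_ hpk
          intro ω hω
          simp only [Set.mem_setOf_eq] at *
          rcases hY01 k ω with h|h
          · exfalso; apply hω; rw [h]; push_cast; ring
          · exact h
        rw [integral_congr_ae hae, integral_zero, hpk0, zero_mul]
      · have hVmeas1 : Measurable fun ω => V k ω + 1 :=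
          meas_comp_nat (fun n => n+1) (hVmeas k)
        have hEV : ∫ ω, g (V k ω + 1)
            = ∑ n ∈ Finset.range (l+1), g n * (ℙ {ω | V k ω + 1 = n}).toReal :=
          integral_comp_nat _ hVmeas1 g l (hVle k hpk)
        have hleft : ∫ ω, (Y k ω : ℝ) * g (W ω)
            = ∑ n ∈ Finset.range (l+1), g n * (ℙ ({ω | W ω = n} ∩ {ω | Y k ω = 1})).toReal :=
          integral_bernoulli_mul_comp W hWmeas (Y k) (hYmeas k) (hY01 k) g l hWle
        rw [hleft, hEV, Finset.mul_sum]
        refine Finset.sum_congr rfl fun n _ => ?_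
        have h : ℙ {ω | V k ω + 1 = n} * ℙ {ω | Y k ω = 1}
            = ℙ ({ω | W ω = n} ∩ {ω | Y k ω = 1}) := hV k {n}
        rw [← h, ENNReal.toReal_mul, hp k]
        ring
    have hlamSW : lam * SW = ∑ i : Fin l, p i * ∫ ω, g (U i ω + 1) := by
      rw [hlam, Finset.sum_mul]
      exact Finset.sum_congr rfl fun i _ => by rw [hEU i]
    have hmain : (ℙ {ω | W ω ∈ A}).toReal - Q
        = ∑ i : Fin l, p i * ((∫ ω, g (U i ω + 1)) - ∫ ω, g (V i ω + 1)) := by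
      rw [hmain1, hWgW, hlamSW, ← Finset.sum_sub_distrib]
      refine Finset.sum_congr rfl fun i _ => ?_
      rw [hYg i]
      ring
    rw [hmain]
    calc |∑ i : Fin l, p i * ((∫ ω, g (U i ω + 1)) - ∫ ω, g (V i ω + 1))|
        ≤ ∑ i : Fin l, |p i * ((∫ ω, g (U i ω + 1)) - ∫ ω, g (V i ω + 1))| :=
          Finset.abs_sum_le_sum_abs _ _
      _ ≤ ∑ i : Fin l, p i * (min 1 (1/lam) * ∫ ω, |(U i ω : ℝ) - (V i ω : ℝ)|) := by
          refine Finset.sum_le_sum fun i _ => ?_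
          rw [abs_mul, abs_of_nonneg (hp0 i)]
          by_cases hpk : (ℙ {ω | Y i ω = 1}) = 0
          · have hpk0 : p i = 0 := by rw [← hp i, hpk]; simp
            rw [hpk0]
            simp
          · refine mul_le_mul_of_nonneg_left ?_ (hp0 i)
            have hVmeas1 : Measurable fun ω => V i ω + 1 :=
              meas_comp_nat (fun n => n+1) (hVmeas i)
            have hIntU1 : Integrable (fun ω => g (U i ω + 1)) :=
              integrable_comp_nat (U i) (hUmeas i) (fun n => g (n+1)) l (hUle i)
            have hIntV1 : Integrable (fun ω => g (V i ω + 1)) :=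
              integrable_comp_nat _ hVmeas1 g l (hVle i hpk)
            have hVle' : ∀ᵐ ω ∂(ℙ:Measure Ω), V i ω ≤ l := by
              filter_upwards [hVle i hpk] with ω h
              omega
            have hIntUV : Integrable (fun ω => |(U i ω : ℝ) - (V i ω : ℝ)|) := by
              refine Integrable.mono' (integrable_const ((l:ℝ) + l))
                (((meas_comp_nat (fun n => (n:ℝ)) (hUmeas i)).sub
                  (meas_comp_nat (fun n => (n:ℝ)) (hVmeas i))).abs).aestronglyMeasurable ?_
              filter_upwards [hUle i, hVle'] with ω h1 h2
              rw [Real.norm_eq_abs, abs_abs]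
              have c1 : (U i ω : ℝ) ≤ l := Nat.cast_le.mpr h1
              have c2 : (V i ω : ℝ) ≤ l := Nat.cast_le.mpr h2
              have c3 : (0:ℝ) ≤ (U i ω : ℝ) := Nat.cast_nonneg _
              have c4 : (0:ℝ) ≤ (V i ω : ℝ) := Nat.cast_nonneg _
              rw [abs_le]
              constructor <;> linarith
            have hd : (∫ ω, g (U i ω + 1)) - ∫ ω, g (V i ω + 1)
                = ∫ ω, (g (U i ω + 1) - g (V i ω + 1)) := (integral_sub hIntU1 hIntV1).symm
            rw [hd]
            calc |∫ ω, (g (U i ω + 1) - g (V i ω + 1))|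
                ≤ ∫ ω, |g (U i ω + 1) - g (V i ω + 1)| := by
                  simpa [Real.norm_eq_abs] using
                    norm_integral_le_integral_norm (fun ω => g (U i ω + 1) - g (V i ω + 1))
              _ ≤ ∫ ω, min 1 (1/lam) * |(U i ω : ℝ) - (V i ω : ℝ)| := by
                  refine integral_mono ((hIntU1.sub hIntV1).abs) (hIntUV.const_mul _) ?_
                  intro ω
                  exact steinG_lipschitz hl A (U i ω) (V i ω)
              _ = min 1 (1/lam) * ∫ ω, |(U i ω : ℝ) - (V i ω : ℝ)| := integral_const_mul _ _
      _ = min 1 (1/lam) * ∑ i : Fin l, p i * ∫ ω, |(U i ω : ℝ) - (V i ω : ℝ)| := by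
          rw [Finset.mul_sum]
          exact Finset.sum_congr rfl fun i _ => by ring
end
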